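/- Let (R, m) be a commutative Noetherian local ring and let A be a pure submodule of an R-module B such that B/A is radical-full and H(A) is an essential submodule of H(B). Then A is pure-essential in B. -/

import Mathlib

open IsLocalRing TensorProduct

universe u v w x

/-- A linear map `f : A → B` is pure if `X ⊗ f` is injective for every
finitely generated `R`-module `X`. -/
def IsPureMap {R : Type u} [CommRing R] {A : Type v} {B : Type w}
    [AddCommGroup A] [Module R A] [AddCommGroup B] [Module R B] (f : A →ₗ[R] B) : Prop :=
  ∀ (X : Type u) [AddCommGroup X] [Module R X], Module.Finite R X →
    Function.Injective (LinearMap.lTensor X f)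

/-- A submodule is pure if its inclusion is a pure map. -/
def IsPureSubmodule {R : Type u} [CommRing R] {B : Type v} [AddCommGroup B] [Module R B]
    (A : Submodule R B) : Prop :=
  IsPureMap A.subtype

/-- A pure submodule `A ⊆ B` is pure-essential if for every submodule `X` with `X ⊓ A = ⊥`
such that `(X + A)/X` is pure in `B/X`, one has `X = ⊥`. -/
def IsPureEssential {R : Type u} [CommRing R] {B : Type v} [AddCommGroup B] [Module R B]
    (A : Submodule R B) : Prop :=
  IsPureSubmodule A ∧
    ∀ X : Submodule R B, X ⊓ A = ⊥ → IsPureSubmodule (A.map X.mkQ) → X = ⊥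

/-- `H(M) = ⋂ₙ mⁿM`, where `m` is the maximal ideal. -/
def adicRad (R : Type u) [CommRing R] [IsLocalRing R]
    (M : Type v) [AddCommGroup M] [Module R M] : Submodule R M :=
  ⨅ n : ℕ, (maximalIdeal R) ^ n • ⊤

/-! Radical-fullness of `B/A` gives `B = mⁿB + A` for every `n`. If `X ∩ A = 0` and `(X + A)/X` is
pure in `B/X`, purity yields `A ∩ (mⁿB + X) ⊆ mⁿA + X`, and the modular law together with
`X ∩ A = 0` then puts `X` inside `mⁿB`. Hence `X ⊆ H(B)` while `X ∩ H(A) ⊆ X ∩ A = 0`, so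
essentiality of `H(A)` in `H(B)` forces `X = 0`. -/

section

variable {R : Type u} [CommRing R] {M : Type v} [AddCommGroup M] [Module R M]

theorem Submodule.pow_smul_top_eq_top {I : Ideal R} (h : I • (⊤ : Submodule R M) = ⊤) (n : ℕ) :
    I ^ n • (⊤ : Submodule R M) = ⊤ := by
  induction n with
  | zero => simp
  | succ n ih => rw [pow_succ, Submodule.mul_smul, h, ih]

theorem Submodule.pow_smul_top_sup_eq_top {I : Ideal R} {N : Submodule R M}
    (h : I • (⊤ : Submodule R (M ⧸ N)) = ⊤) (n : ℕ) : I ^ n • ⊤ ⊔ N = ⊤ := by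
  rw [sup_comm, ← Submodule.map_mkQ_eq_top, Submodule.map_smul'', Submodule.map_top,
    Submodule.range_mkQ, Submodule.pow_smul_top_eq_top h]

theorem TensorProduct.one_tmul_eq_zero_iff_mem_smul_top {I : Ideal R} {x : M} :
    (1 : R ⧸ I) ⊗ₜ[R] x = 0 ↔ x ∈ I • (⊤ : Submodule R M) := by
  rw [← quotTensorEquivQuotSMul_symm_mk, LinearEquiv.map_eq_zero_iff,
    Submodule.Quotient.mk_eq_zero]

theorem IsPureSubmodule.inf_smul_top_le {A : Submodule R M} (hA : IsPureSubmodule A)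
    (I : Ideal R) : A ⊓ I • ⊤ ≤ I • A := by
  rintro x ⟨hxA, hxI⟩
  have hx : (⟨x, hxA⟩ : A) ∈ I • (⊤ : Submodule R A) := by
    rw [← one_tmul_eq_zero_iff_mem_smul_top]
    apply hA (R ⧸ I) inferInstance
    rwa [LinearMap.lTensor_tmul, map_zero, one_tmul_eq_zero_iff_mem_smul_top]
  simpa [Submodule.map_smul''] using Submodule.mem_map_of_mem (f := A.subtype) hx

theorem le_smul_top_of_isPureSubmodule_map_mkQ {J : Ideal R} {A X : Submodule R M} (hXA : X ⊓ A = ⊥)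
    (hpure : IsPureSubmodule (A.map X.mkQ)) (hsup : J • ⊤ ⊔ A = ⊤) :
    X ≤ J • ⊤ := by
  have hA_inf : A ⊓ (J • ⊤ ⊔ X) ≤ J • A ⊔ X := by
    rw [sup_comm, ← Submodule.comap_map_mkQ, sup_comm, ← Submodule.comap_map_mkQ,
      Submodule.map_smul'', Submodule.map_smul'', Submodule.map_top, Submodule.range_mkQ,
      ← Submodule.map_le_iff_le_comap]
    exact (Submodule.map_inf_le _).trans <| (inf_le_inf_left _ (Submodule.map_comap_le _ _)).trans
      (hpure.inf_smul_top_le J)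
  calc X ≤ (J • ⊤ ⊔ A) ⊓ (J • ⊤ ⊔ X) := by rw [hsup]; exact le_inf le_top le_sup_right
    _ = J • ⊤ ⊔ A ⊓ (J • ⊤ ⊔ X) := sup_inf_assoc_of_le _ le_sup_left
    _ ≤ J • ⊤ ⊔ A ⊓ (J • A ⊔ X) := sup_le_sup_left (le_inf inf_le_left hA_inf) _
    _ = J • ⊤ := by
      rw [inf_comm, sup_inf_assoc_of_le _ Submodule.smul_le_right, hXA, sup_bot_eq,
        sup_eq_left]
      exact smul_mono_right _ le_top

end

theorem pureEssential_of_radicalFull_of_essential_general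
    (R : Type u) [CommRing R] [IsLocalRing R]
    {B : Type v} [AddCommGroup B] [Module R B] (A : Submodule R B)
    (hpure : IsPureSubmodule A)
    (hrad : maximalIdeal R • (⊤ : Submodule R (B ⧸ A)) = ⊤)
    (hess : ∀ W : Submodule R B, W ≤ adicRad R B →
      W ⊓ (⨅ n : ℕ, (maximalIdeal R) ^ n • A) = ⊥ → W = ⊥) :
    IsPureEssential A := by
  refine ⟨hpure, fun X hXA hXpure => hess X ?_ ?_⟩
  · exact le_iInf fun n => le_smul_top_of_isPureSubmodule_map_mkQ hXA hXpure
      (Submodule.pow_smul_top_sup_eq_top hrad n)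
  · refine eq_bot_mono (inf_le_inf_left X ?_) hXA
    simpa using iInf_le (fun n : ℕ => maximalIdeal R ^ n • A) 0

theorem pureEssential_of_radicalFull_of_essential
    (R : Type u) [CommRing R] [IsNoetherianRing R] [IsLocalRing R]
    {B : Type v} [AddCommGroup B] [Module R B] (A : Submodule R B)
    (hpure : IsPureSubmodule A)
    (hrad : maximalIdeal R • (⊤ : Submodule R (B ⧸ A)) = ⊤)
    (hess : ∀ W : Submodule R B, W ≤ adicRad R B →
      W ⊓ (⨅ n : ℕ, (maximalIdeal R) ^ n • A) = ⊥ → W = ⊥) :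
    IsPureEssential A :=
  pureEssential_of_radicalFull_of_essential_general R A hpure hrad hess
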